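/- Define m as in the previous context (type (g,1), g ≥ 4, d = g+1). Then m satisfies the triangle axiom: for all (e,h,A), (e′,h′,A′), (e″,h″,A″) in the domain with A = A′ ∪ A″, A′ ∩ A″ = ∅, 2(h + 1 − (h′ + h″)) = e′ + e″ − e, and e, e′, e″ satisfying the strict triangle inequalities, one has 0 ≤ (m(e,h,A) − h) − ((m(e′,h′,A′) − h′) + (m(e″,h″,A″) − h″)) ≤ 1. -/

import Mathlib

/-!
Because `g ≥ 4`, the three exceptional values of `mEx` occur below `h = g - 2`, so
`mEx g e h A - h` is the indicator of `IsExcess g e h A`. The triangle relation gives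
`h' + h'' ≤ h`, which together with the parity of `e' + e'' - e` and the triangle inequalities
lets excess pass from a part to the whole; the bound `h ≤ g + 1 - e` and the disjointness of
`A'` and `A''` forbid both parts from being in excess.
-/

/-- The stability domain `D_{g,1}` of vine-graph triples `(e,h,A)`, `A ⊆ {1}`. -/
def StabDom (g : ℤ) (e h : ℤ) (A : Finset (Fin 1)) : Prop :=
  1 ≤ e ∧ e ≤ g + 1 ∧ 0 ≤ h ∧ h ≤ g + 1 - e ∧
    ¬(e = 2 ∧ h = 0 ∧ A = ∅) ∧ ¬(e = 2 ∧ h = g - 1 ∧ A = Finset.univ)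

/-- The stability condition of Example exg1 (type `(g,1)`, degree `d = g+1`). -/
def mEx (g : ℤ) (e h : ℤ) (A : Finset (Fin 1)) : ℤ :=
  if e = 2 ∧ h = 0 ∧ A = Finset.univ then 0
  else if e = 3 ∧ h = 0 ∧ A = Finset.univ then 0
  else if e = 2 ∧ h = 1 ∧ A = Finset.univ then 1
  else if g - 2 ≤ h then h + 1
  else h + (if A = Finset.univ then 1 else 0)

def IsExcess (g e h : ℤ) (A : Finset (Fin 1)) : Prop :=
  g - 2 ≤ h ∨ A = Finset.univ ∧ ¬((e = 2 ∨ e = 3) ∧ h = 0) ∧ ¬(e = 2 ∧ h = 1)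

instance (g e h : ℤ) (A : Finset (Fin 1)) : Decidable (IsExcess g e h A) := by
  unfold IsExcess
  infer_instance

theorem mEx_sub_eq_ite {g : ℤ} (hg : 4 ≤ g) (e h : ℤ) (A : Finset (Fin 1)) :
    mEx g e h A - h = if IsExcess g e h A then 1 else 0 := by
  unfold mEx IsExcess
  by_cases hA : A = Finset.univ <;>
    simp only [hA, and_true, and_false, false_and, true_and, or_false, if_true, if_false,
      add_zero] <;>
    split_ifs <;> omega

structure IsTriangle (e h e' h' e'' h'' : ℤ) : Prop where
  two_mul_sub : 2 * (h + 1 - (h' + h'')) = e' + e'' - e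
  lt_add : e < e' + e''
  left_lt : e' < e + e''
  right_lt : e'' < e + e'

namespace IsTriangle

variable {e h e' h' e'' h'' : ℤ}

theorem swap (t : IsTriangle e h e' h' e'' h'') : IsTriangle e h e'' h'' e' h' where
  two_mul_sub := by rw [add_comm h'', add_comm e'']; exact t.two_mul_sub
  lt_add := by rw [add_comm]; exact t.lt_add
  left_lt := t.right_lt
  right_lt := t.left_lt

theorem isExcess_of_isExcess_left {g : ℤ} {A A' : Finset (Fin 1)}
    (t : IsTriangle e h e' h' e'' h'') (hh' : 0 ≤ h') (hh'' : 0 ≤ h'') (hA : A' ⊆ A)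
    (hx : IsExcess g e' h' A') : IsExcess g e h A := by
  have := t.two_mul_sub; have := t.lt_add; have := t.left_lt; have := t.right_lt
  rcases hx with hle | ⟨rfl, hnot₁, hnot₂⟩
  · exact Or.inl (by omega)
  · exact Or.inr ⟨Finset.univ_subset_iff.mp hA, by omega, by omega⟩

theorem not_isExcess_and_isExcess {g : ℤ} {A' A'' : Finset (Fin 1)} (hg : 4 ≤ g)
    (t : IsTriangle e h e' h' e'' h'') (hh : h ≤ g + 1 - e) (hh' : 0 ≤ h') (hh'' : 0 ≤ h'')
    (hA : Disjoint A' A'') : ¬(IsExcess g e' h' A' ∧ IsExcess g e'' h'' A'') := by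
  have := t.two_mul_sub; have := t.lt_add; have := t.left_lt; have := t.right_lt
  rintro ⟨hle' | ⟨rfl, hnot₁', hnot₂'⟩, hle'' | ⟨rfl, hnot₁'', hnot₂''⟩⟩
  · omega
  · omega
  · omega
  · simp at hA

end IsTriangle

/-- `mEx` satisfies the triangle axiom. -/
theorem mEx_triangle (g : ℤ) (hg : 4 ≤ g) :
    ∀ e h : ℤ, ∀ A : Finset (Fin 1), ∀ e' h' : ℤ, ∀ A' : Finset (Fin 1),
      ∀ e'' h'' : ℤ, ∀ A'' : Finset (Fin 1),
      StabDom g e h A → StabDom g e' h' A' → StabDom g e'' h'' A'' →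
      A = A' ∪ A'' → A' ∩ A'' = ∅ →
      2 * (h + 1 - (h' + h'')) = e' + e'' - e →
      e < e' + e'' → e' < e + e'' → e'' < e + e' →
      0 ≤ (mEx g e h A - h) - ((mEx g e' h' A' - h') + (mEx g e'' h'' A'' - h'')) ∧
        (mEx g e h A - h) - ((mEx g e' h' A' - h') + (mEx g e'' h'' A'' - h'')) ≤ 1 := by
  rintro e h A e' h' A' e'' h'' A'' ⟨-, -, -, hh, -⟩ ⟨-, -, hh', -⟩ ⟨-, -, hh'', -⟩ rfl hdisj
    hrel t₁ t₂ t₃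
  have t : IsTriangle e h e' h' e'' h'' := ⟨hrel, t₁, t₂, t₃⟩
  have mono' : IsExcess g e' h' A' → IsExcess g e h (A' ∪ A'') :=
    t.isExcess_of_isExcess_left hh' hh'' Finset.subset_union_left
  have mono'' : IsExcess g e'' h'' A'' → IsExcess g e h (A' ∪ A'') :=
    t.swap.isExcess_of_isExcess_left hh'' hh' Finset.subset_union_right
  have excl := t.not_isExcess_and_isExcess hg hh hh' hh''
    (Finset.disjoint_iff_inter_eq_empty.mpr hdisj)
  rw [mEx_sub_eq_ite hg, mEx_sub_eq_ite hg, mEx_sub_eq_ite hg]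
  split_ifs <;> simp_all
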